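/- Let μ denote the Möbius function of the finite poset NC_n (noncrossing partitions of {1,…,n} ordered by refinement), whose bottom element 0̂ is the partition into singletons and whose top element 1̂ is the one-block partition. Then for every π ∈ NC_n, μ(0̂, π) = μ(π^c, 1̂). -/

import Mathlib

def IsNoncrossing {n : ℕ} (π : Finpartition (Finset.Icc 1 n)) : Prop :=
  ∀ i j k l : ℕ, i < j → j < k → k < l →
    ∀ B ∈ π.parts, ∀ B' ∈ π.parts, i ∈ B → k ∈ B → j ∈ B' → l ∈ B' → B = B'

/-- `i` and `j` lie in a common block of `π`. -/
def sameBlock {n : ℕ} (π : Finpartition (Finset.Icc 1 n)) (i j : ℕ) : Prop :=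
  ∃ B ∈ π.parts, i ∈ B ∧ j ∈ B

/-- The Kreweras relation of `π`: no block of `π` contains both an element of the
interval `{min i j + 1, …, max i j}` and an element of its complement. -/
def krewRel {n : ℕ} (π : Finpartition (Finset.Icc 1 n)) (i j : ℕ) : Prop :=
  ∀ B ∈ π.parts, (∃ a ∈ B, a ∈ Finset.Ioc (min i j) (max i j)) →
    B ⊆ Finset.Ioc (min i j) (max i j)

/-- Refinement order: every block of `σ` is contained in a block of `π`. -/
def refines {n : ℕ} (σ π : Finpartition (Finset.Icc 1 n)) : Prop :=
  ∀ B ∈ σ.parts, ∃ B' ∈ π.parts, B ⊆ B'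

/-!
The Kreweras complement `K` is an order-reversing bijection of `NC_n` onto itself with
`K 0̂ = 1̂`, so it maps the interval `[0̂, π]` anti-isomorphically onto `[K π, 1̂]`. The Möbius
function of a locally finite poset is invariant under order isomorphisms and is transposed by
passing to the dual order, which gives `μ(0̂, π) = μ(K π, 1̂)`.

That `K` reflects the order (hence is injective, hence bijective) comes from recovering `π` from
`K π`: for noncrossing `π` and `i < j`, the points `i` and `j` share a block of `π` iff
`{i, …, j - 1}` is a union of blocks of `K π`. If not, let `q` be the last point of the block of
`i` before `j`; the gap between `q` and the next point of that block (or, if there is none, the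
span of the whole block) is a union of blocks of `π` by noncrossingness, and this exhibits a point
of `{i, …, j - 1}` that `K π` joins to a point outside it.
-/

open Finset OrderDual

namespace IncidenceAlgebra

variable {𝕜 α β : Type*} [PartialOrder α] [LocallyFiniteOrder α] [DecidableEq α]
  [PartialOrder β] [LocallyFiniteOrder β] [DecidableEq β]

theorem eq_mu_of_sum_Icc_eq_zero [AddCommGroup 𝕜] [One 𝕜] {f : α → α → 𝕜}
    (h_self : ∀ a, f a a = 1) (h_sum : ∀ a b, a < b → ∑ x ∈ Icc a b, f a x = 0)
    {a b : α} (hab : a ≤ b) : f a b = mu 𝕜 a b := by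
  induction hcard : #(Icc a b) using Nat.strong_induction_on generalizing b with
  | _ N ih =>
  obtain rfl | hlt := hab.eq_or_lt
  · rw [h_self, mu_self]
  have h_Ico : ∑ x ∈ Ico a b, f a x = ∑ x ∈ Ico a b, mu 𝕜 a x := by
    refine sum_congr rfl fun x hx => ?_
    rw [mem_Ico] at hx
    exact ih _ (hcard ▸ card_lt_card (Icc_ssubset_Icc_right hlt.le le_rfl hx.2)) hx.1 rfl
  have h := h_sum a b hlt
  rw [Icc_eq_cons_Ico hlt.le, sum_cons, h_Ico] at h
  rw [mu_eq_neg_sum_Ico_of_ne hlt.ne]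
  exact eq_neg_of_add_eq_zero_left h

theorem mu_map [AddCommGroup 𝕜] [One 𝕜] (e : α ≃o β) (a b : α) :
    mu 𝕜 (e a) (e b) = mu 𝕜 a b := by
  by_cases hab : a ≤ b
  · refine eq_mu_of_sum_Icc_eq_zero (f := fun a b => mu 𝕜 (e a) (e b)) (fun _ => mu_self _)
      (fun a b hlt => ?_) hab
    calc ∑ x ∈ Icc a b, mu 𝕜 (e a) (e x) = ∑ y ∈ Icc (e a) (e b), mu 𝕜 (e a) y :=
          sum_equiv e.toEquiv (by simp) fun _ _ => rfl
      _ = 0 := by rw [sum_Icc_mu_right, if_neg (e.injective.ne hlt.ne)]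
  · rw [apply_eq_zero_of_not_le hab, apply_eq_zero_of_not_le (by simpa using hab)]

theorem mu_map_dual [Ring 𝕜] (e : α ≃o βᵒᵈ) (a b : α) :
    mu 𝕜 (ofDual (e b)) (ofDual (e a)) = mu 𝕜 a b := by
  rw [mu_ofDual, mu_map]

end IncidenceAlgebra

theorem finsum_mem_setOf_le_le_eq_sum_Icc {α M : Type*} [PartialOrder α] [AddCommMonoid M]
    {p : α → Prop} [LocallyFiniteOrder (Subtype p)] (f : α → M) (a b : Subtype p) :
    ∑ᶠ x ∈ {x | p x ∧ a.1 ≤ x ∧ x ≤ b.1}, f x = ∑ x ∈ Icc a b, f x := by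
  have h : {x | p x ∧ a.1 ≤ x ∧ x ≤ b.1} = Subtype.val '' (Icc a b : Set (Subtype p)) := by
    ext x
    simp only [Set.mem_ofPred_eq, coe_Icc, Set.mem_image, Set.mem_Icc, Subtype.exists,
      exists_and_right, exists_eq_right]
    tauto
  rw [h, finsum_mem_image Subtype.val_injective.injOn, finsum_mem_coe_finset]

section Kreweras

variable {n : ℕ}

def IsSaturated (π : Finpartition (Icc 1 n)) (I : Finset ℕ) : Prop :=
  ∀ B ∈ π.parts, (∃ a ∈ B, a ∈ I) → B ⊆ I

theorem IsSaturated.symmDiff {π : Finpartition (Icc 1 n)} {I J : Finset ℕ}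
    (hI : IsSaturated π I) (hJ : IsSaturated π J) : IsSaturated π (symmDiff I J) := by
  intro B hB ⟨a, haB, haIJ⟩
  have key : (B ⊆ I ∧ Disjoint B J) ∨ (B ⊆ J ∧ Disjoint B I) := by
    rcases mem_symmDiff.mp haIJ with ⟨haI, haJ⟩ | ⟨haJ, haI⟩
    · exact .inl ⟨hI B hB ⟨a, haB, haI⟩,
        disjoint_right.mpr fun x hxJ hxB => haJ (hJ B hB ⟨x, hxB, hxJ⟩ haB)⟩
    · exact .inr ⟨hJ B hB ⟨a, haB, haJ⟩,
        disjoint_right.mpr fun x hxI hxB => haI (hI B hB ⟨x, hxB, hxI⟩ haB)⟩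
  intro x hxB
  rw [mem_symmDiff]
  rcases key with ⟨hBI, hBJ⟩ | ⟨hBJ, hBI⟩
  · exact .inl ⟨hBI hxB, disjoint_left.mp hBJ hxB⟩
  · exact .inr ⟨hBJ hxB, disjoint_left.mp hBI hxB⟩

theorem IsSaturated.of_le {σ τ : Finpartition (Icc 1 n)} (hστ : σ ≤ τ) {I : Finset ℕ}
    (hI : IsSaturated τ I) : IsSaturated σ I := by
  intro B hB ⟨x, hxB, hxI⟩
  obtain ⟨C, hC, hBC⟩ := hστ hB
  exact hBC.trans (hI C hC ⟨x, hBC hxB, hxI⟩)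

theorem krewRel_iff_isSaturated (π : Finpartition (Icc 1 n)) {i j : ℕ} (hij : i ≤ j) :
    krewRel π i j ↔ IsSaturated π (Ioc i j) := by
  rw [krewRel, min_eq_left hij, max_eq_right hij]
  rfl

theorem krewRel_refl (π : Finpartition (Icc 1 n)) (a : ℕ) : krewRel π a a := by
  intro B _ ⟨_, _, hx⟩
  simp at hx

theorem krewRel_symm {π : Finpartition (Icc 1 n)} {a b : ℕ} (h : krewRel π a b) :
    krewRel π b a := by
  rwa [krewRel, min_comm, max_comm]

theorem krewRel_trans {π : Finpartition (Icc 1 n)} {a b c : ℕ} (hab : krewRel π a b)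
    (hbc : krewRel π b c) : krewRel π a c := by
  have hIoc : Ioc (min a c) (max a c) =
      symmDiff (Ioc (min a b) (max a b)) (Ioc (min b c) (max b c)) := by
    ext x
    simp only [mem_symmDiff, mem_Ioc, min_lt_iff, le_max_iff, not_and, not_le, not_or]
    omega
  rw [krewRel, hIoc]
  exact IsSaturated.symmDiff hab hbc

def krewerasSetoid (π : Finpartition (Icc 1 n)) : Setoid ℕ :=
  ⟨krewRel π, ⟨krewRel_refl π, krewRel_symm, krewRel_trans⟩⟩

open Classical in
noncomputable def krewerasCompl (π : Finpartition (Icc 1 n)) : Finpartition (Icc 1 n) :=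
  .ofSetSetoid (krewerasSetoid π) (Icc 1 n)

theorem sameBlock_iff_mem_part (π : Finpartition (Icc 1 n)) (i j : ℕ) :
    sameBlock π i j ↔ i ∈ π.part j :=
  π.mem_part_iff_exists.symm

theorem sameBlock_comm {π : Finpartition (Icc 1 n)} {i j : ℕ} :
    sameBlock π i j ↔ sameBlock π j i :=
  ⟨fun ⟨B, hB, hi, hj⟩ => ⟨B, hB, hj, hi⟩, fun ⟨B, hB, hj, hi⟩ => ⟨B, hB, hi, hj⟩⟩

theorem sameBlock_self {π : Finpartition (Icc 1 n)} {i : ℕ} (hi : i ∈ Icc 1 n) :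
    sameBlock π i i :=
  (sameBlock_iff_mem_part π i i).mpr (π.mem_part hi)

theorem mem_of_sameBlock {π : Finpartition (Icc 1 n)} {i j : ℕ} (h : sameBlock π i j) :
    i ∈ Icc 1 n ∧ j ∈ Icc 1 n :=
  let ⟨_, hB, hi, hj⟩ := h
  ⟨π.le hB hi, π.le hB hj⟩

theorem le_iff_forall_sameBlock {σ τ : Finpartition (Icc 1 n)} :
    σ ≤ τ ↔ ∀ i j, sameBlock σ i j → sameBlock τ i j := by
  constructor
  · rintro hστ i j ⟨B, hB, hi, hj⟩
    obtain ⟨C, hC, hBC⟩ := hστ hB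
    exact ⟨C, hC, hBC hi, hBC hj⟩
  · intro h B hB
    obtain ⟨a, ha⟩ := σ.nonempty_of_mem_parts hB
    refine ⟨τ.part a, τ.part_mem.mpr (σ.le hB ha), fun x hx => ?_⟩
    exact (sameBlock_iff_mem_part τ x a).mp (h x a ⟨B, hB, hx, ha⟩)

theorem eq_of_forall_sameBlock_iff {σ τ : Finpartition (Icc 1 n)}
    (h : ∀ i ∈ Icc 1 n, ∀ j ∈ Icc 1 n, sameBlock σ i j ↔ sameBlock τ i j) : σ = τ := by
  refine le_antisymm (le_iff_forall_sameBlock.mpr fun i j hij => ?_)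
    (le_iff_forall_sameBlock.mpr fun i j hij => ?_)
  · obtain ⟨hi, hj⟩ := mem_of_sameBlock hij
    exact (h i hi j hj).mp hij
  · obtain ⟨hi, hj⟩ := mem_of_sameBlock hij
    exact (h i hi j hj).mpr hij

theorem sameBlock_krewerasCompl {σ : Finpartition (Icc 1 n)} {i j : ℕ} :
    sameBlock (krewerasCompl σ) i j ↔ i ∈ Icc 1 n ∧ j ∈ Icc 1 n ∧ krewRel σ i j := by
  rw [sameBlock_iff_mem_part, krewerasCompl, Finpartition.mem_part_ofSetSetoid_iff_rel]
  exact ⟨fun ⟨hj, hi, h⟩ => ⟨hi, hj, krewRel_symm h⟩, fun ⟨hi, hj, h⟩ => ⟨hj, hi, krewRel_symm h⟩⟩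

theorem krewerasCompl_anti {σ τ : Finpartition (Icc 1 n)} (hστ : σ ≤ τ) :
    krewerasCompl τ ≤ krewerasCompl σ := by
  simp only [le_iff_forall_sameBlock, sameBlock_krewerasCompl]
  exact fun i j ⟨hi, hj, h⟩ => ⟨hi, hj, IsSaturated.of_le hστ h⟩

theorem isNoncrossing_krewerasCompl (σ : Finpartition (Icc 1 n)) :
    IsNoncrossing (krewerasCompl σ) := by
  intro i j k l hij hjk hkl B hB C hC hiB hkB hjC hlC
  have hik := (sameBlock_krewerasCompl.mp ⟨B, hB, hiB, hkB⟩).2.2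
  have hjl := (sameBlock_krewerasCompl.mp ⟨C, hC, hjC, hlC⟩).2.2
  rw [krewRel_iff_isSaturated σ (hij.trans hjk).le] at hik
  rw [krewRel_iff_isSaturated σ (hjk.trans hkl).le] at hjl
  -- a block of `σ` meeting `(i, j]` lies in `(i, k]` and misses `(j, l]`
  have hij' : krewRel σ i j := by
    rw [krewRel_iff_isSaturated σ hij.le]
    intro D hD ⟨x, hxD, hx⟩ y hyD
    rw [mem_Ioc] at hx
    have hy := mem_Ioc.mp (hik D hD ⟨x, hxD, mem_Ioc.mpr ⟨hx.1, by omega⟩⟩ hyD)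
    refine mem_Ioc.mpr ⟨hy.1, not_lt.mp fun hjy => ?_⟩
    have := mem_Ioc.mp (hjl D hD ⟨y, hyD, mem_Ioc.mpr ⟨hjy, by omega⟩⟩ hxD)
    omega
  obtain ⟨D, hD, hiD, hjD⟩ := sameBlock_krewerasCompl.mpr
    ⟨(krewerasCompl σ).le hB hiB, (krewerasCompl σ).le hC hjC, hij'⟩
  rw [(krewerasCompl σ).eq_of_mem_parts hB hD hiB hiD,
    (krewerasCompl σ).eq_of_mem_parts hC hD hjC hjD]

theorem isSaturated_krewerasCompl_of_sameBlock {σ : Finpartition (Icc 1 n)} {i j : ℕ}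
    (h : sameBlock σ i j) : IsSaturated (krewerasCompl σ) (Ico (min i j) (max i j)) := by
  wlog hij : i ≤ j generalizing i j
  · rw [min_comm, max_comm]
    exact this (sameBlock_comm.mp h) (by omega)
  rw [min_eq_left hij, max_eq_right hij]
  obtain ⟨B, hB, hiB, hjB⟩ := h
  intro C hC ⟨x, hxC, hx⟩ y hyC
  have hxy := (sameBlock_krewerasCompl.mp ⟨C, hC, hxC, hyC⟩).2.2
  rw [mem_Ico] at hx ⊢
  by_contra hy
  have hmeet : ∃ a ∈ B, a ∈ Ioc (min x y) (max x y) := by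
    rcases le_or_gt j y with hjy | hyj
    · exact ⟨j, hjB, mem_Ioc.mpr (by omega)⟩
    · exact ⟨i, hiB, mem_Ioc.mpr (by omega)⟩
  have hi := mem_Ioc.mp (hxy B hB hmeet hiB)
  have hj := mem_Ioc.mp (hxy B hB hmeet hjB)
  omega

theorem IsNoncrossing.subset_Ioo {σ : Finpartition (Icc 1 n)} (hσ : IsNoncrossing σ)
    {B C : Finset ℕ} (hB : B ∈ σ.parts) (hC : C ∈ σ.parts) (hCB : C ≠ B) {a b x : ℕ}
    (ha : a ∈ B) (hb : b ∈ B) (hx : x ∈ C) (hax : a < x) (hxb : x < b) : C ⊆ Ioo a b := by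
  intro y hy
  have hya : y ≠ a := fun h => hCB (σ.eq_of_mem_parts hC hB hy (h ▸ ha))
  have hyb : y ≠ b := fun h => hCB (σ.eq_of_mem_parts hC hB hy (h ▸ hb))
  rw [mem_Ioo]
  by_contra hout
  rcases hya.lt_or_gt with hya | hay
  · exact hCB (hσ y a x b hya hax hxb C hC B hB hy hx ha hb)
  · exact hCB (hσ a x b y hax hxb (by omega) B hB C hC ha hb hx hy).symm

theorem IsNoncrossing.krewRel_of_gap {σ : Finpartition (Icc 1 n)} (hσ : IsNoncrossing σ)
    {B : Finset ℕ} (hB : B ∈ σ.parts) {q q' : ℕ} (hq : q ∈ B) (hq' : q' ∈ B) (hqq' : q < q')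
    (hgap : ∀ y ∈ B, y ∉ Ioo q q') : krewRel σ q (q' - 1) := by
  rw [krewRel_iff_isSaturated σ (by omega), show Ioc q (q' - 1) = Ioo q q' by ext; simp; omega]
  intro C hC ⟨x, hxC, hx⟩
  have hCB : C ≠ B := by
    rintro rfl
    exact hgap x hxC hx
  rw [mem_Ioo] at hx
  exact hσ.subset_Ioo hB hC hCB hq hq' hxC hx.1 hx.2

theorem IsNoncrossing.krewRel_of_hull {σ : Finpartition (Icc 1 n)} (hσ : IsNoncrossing σ)
    {B : Finset ℕ} (hB : B ∈ σ.parts) {m M : ℕ} (hm : m ∈ B) (hM : M ∈ B)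
    (hBmM : B ⊆ Icc m M) : krewRel σ (m - 1) M := by
  have hm1 : 1 ≤ m := (mem_Icc.mp (σ.le hB hm)).1
  have hmM : m ≤ M := (mem_Icc.mp (hBmM hm)).2
  rw [krewRel_iff_isSaturated σ (by omega), show Ioc (m - 1) M = Icc m M by ext; simp; omega]
  intro C hC ⟨x, hxC, hx⟩
  by_cases hCB : C = B
  · exact hCB ▸ hBmM
  have hxm : x ≠ m := fun h => hCB (σ.eq_of_mem_parts hC hB hxC (h ▸ hm))
  have hxM : x ≠ M := fun h => hCB (σ.eq_of_mem_parts hC hB hxC (h ▸ hM))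
  rw [mem_Icc] at hx
  exact (hσ.subset_Ioo hB hC hCB hm hM hxC (by omega) (by omega)).trans Ioo_subset_Icc_self

theorem krewRel_zero_n (π : Finpartition (Icc 1 n)) : krewRel π 0 n := by
  rw [krewRel_iff_isSaturated π (Nat.zero_le n), show Ioc 0 n = Icc 1 n by ext; simp; omega]
  exact fun B hB _ => π.le hB

theorem IsNoncrossing.exists_krewRel_not_mem_Ico {σ : Finpartition (Icc 1 n)}
    (hσ : IsNoncrossing σ) {B : Finset ℕ} (hB : B ∈ σ.parts) {i j q : ℕ} (hiB : i ∈ B)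
    (hjB : j ∉ B) (hjn : j ≤ n) (hqB : q ∈ B) (hqj : q < j) (hq_max : ∀ y ∈ B, y < j → y ≤ q) :
    ∃ b ∈ Icc 1 n, krewRel σ q b ∧ b ∉ Ico i j := by
  have hBn : ∀ y ∈ B, y ∈ Icc 1 n := fun y hy => σ.le hB hy
  by_cases hnext : ∃ y ∈ B, q < y
  · obtain ⟨q', hq', hq'_min⟩ := (B.filter (q < ·)).exists_min_image id
      (hnext.imp fun y hy => mem_filter.mpr hy)
    rw [mem_filter] at hq'
    have hjq' : j < q' := by
      have hq'j : ¬ q' < j := fun h => by have := hq_max q' hq'.1 h; omega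
      have : q' ≠ j := fun h => hjB (h ▸ hq'.1)
      omega
    refine ⟨q' - 1, by have := mem_Icc.mp (hBn q' hq'.1); simp only [mem_Icc]; omega,
      hσ.krewRel_of_gap hB hqB hq'.1 hq'.2 fun y hy hyI => ?_, by simp only [mem_Ico]; omega⟩
    have := hq'_min y (mem_filter.mpr ⟨hy, (mem_Ioo.mp hyI).1⟩)
    simp only [id, mem_Ioo] at this hyI
    omega
  · push Not at hnext
    obtain ⟨m, hm, hm_min⟩ := B.exists_min_image id ⟨i, hiB⟩
    have hrel := hσ.krewRel_of_hull hB hm hqB fun y hy => mem_Icc.mpr ⟨hm_min y hy, hnext y hy⟩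
    have hmi : m ≤ i := hm_min i hiB
    have hmn := mem_Icc.mp (hBn m hm)
    rcases (show m = 1 ∨ 2 ≤ m by omega) with rfl | hm2
    · -- the block starts at `1`, so its complement `(q, n]` is a union of blocks too
      exact ⟨n, right_mem_Icc.mpr (by omega),
        krewRel_trans (krewRel_symm hrel) (krewRel_zero_n σ), by simp only [mem_Ico]; omega⟩
    · exact ⟨m - 1, by simp only [mem_Icc]; omega, krewRel_symm hrel, by simp only [mem_Ico]; omega⟩

theorem IsNoncrossing.sameBlock_of_isSaturated_krewerasCompl {σ : Finpartition (Icc 1 n)}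
    (hσ : IsNoncrossing σ) {i j : ℕ} (hi : i ∈ Icc 1 n) (hj : j ∈ Icc 1 n) (hij : i < j)
    (h : IsSaturated (krewerasCompl σ) (Ico i j)) : sameBlock σ i j := by
  have hB : σ.part i ∈ σ.parts := σ.part_mem.mpr hi
  have hiB : i ∈ σ.part i := σ.mem_part hi
  by_contra hji
  have hjB : j ∉ σ.part i := fun hjB => hji ⟨_, hB, hiB, hjB⟩
  obtain ⟨q, hq, hq_max⟩ := ((σ.part i).filter (· < j)).exists_max_image id
    ⟨i, mem_filter.mpr ⟨hiB, hij⟩⟩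
  rw [mem_filter] at hq
  have hiq : i ≤ q := hq_max i (mem_filter.mpr ⟨hiB, hij⟩)
  obtain ⟨b, hb, hqb, hbI⟩ := hσ.exists_krewRel_not_mem_Ico hB hiB hjB (mem_Icc.mp hj).2 hq.1
    hq.2 fun y hy hyj => hq_max y (mem_filter.mpr ⟨hy, hyj⟩)
  obtain ⟨C, hC, hqC, hbC⟩ := sameBlock_krewerasCompl.mpr ⟨σ.le hB hq.1, hb, hqb⟩
  exact hbI (h C hC ⟨q, hqC, mem_Ico.mpr ⟨hiq, hq.2⟩⟩ hbC)

theorem IsNoncrossing.sameBlock_iff_isSaturated_krewerasCompl {σ : Finpartition (Icc 1 n)}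
    (hσ : IsNoncrossing σ) {i j : ℕ} (hi : i ∈ Icc 1 n) (hj : j ∈ Icc 1 n) :
    sameBlock σ i j ↔ IsSaturated (krewerasCompl σ) (Ico (min i j) (max i j)) := by
  refine ⟨isSaturated_krewerasCompl_of_sameBlock, fun h => ?_⟩
  wlog hij : i ≤ j generalizing i j
  · rw [min_comm, max_comm] at h
    exact sameBlock_comm.mp (this hj hi h (by omega))
  rw [min_eq_left hij, max_eq_right hij] at h
  obtain rfl | hlt := hij.eq_or_lt
  · exact sameBlock_self hi
  · exact hσ.sameBlock_of_isSaturated_krewerasCompl hi hj hlt h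

theorem IsNoncrossing.le_of_krewerasCompl_le {σ τ : Finpartition (Icc 1 n)}
    (hσ : IsNoncrossing σ) (h : krewerasCompl σ ≤ krewerasCompl τ) : τ ≤ σ := by
  refine le_iff_forall_sameBlock.mpr fun i j hij => ?_
  obtain ⟨hi, hj⟩ := mem_of_sameBlock hij
  exact (hσ.sameBlock_iff_isSaturated_krewerasCompl hi hj).mpr
    ((isSaturated_krewerasCompl_of_sameBlock hij).of_le h)

theorem eq_bot_of_parts_eq_image_singleton {bot : Finpartition (Icc 1 n)}
    (h : bot.parts = (Icc 1 n).image fun i => {i}) : bot = ⊥ :=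
  Finpartition.ext (by rw [h, Finpartition.parts_bot, map_eq_image]; rfl)

theorem isNoncrossing_bot : IsNoncrossing (⊥ : Finpartition (Icc 1 n)) := by
  intro i j k l hij hjk hkl B hB _ _ hiB hkB _ _
  obtain ⟨a, _, rfl⟩ := Finpartition.mem_bot_iff.mp hB
  rw [mem_singleton] at hiB hkB
  omega

theorem krewerasCompl_bot {top : Finpartition (Icc 1 n)} (htop : top.parts = {Icc 1 n}) :
    krewerasCompl ⊥ = top := by
  refine eq_of_forall_sameBlock_iff fun i hi j hj => ?_
  have htop_ij : sameBlock top i j := ⟨_, htop ▸ mem_singleton_self _, hi, hj⟩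
  refine sameBlock_krewerasCompl.trans ⟨fun _ => htop_ij, fun _ => ⟨hi, hj, ?_⟩⟩
  intro B hB ⟨x, hxB, hx⟩
  obtain ⟨a, _, rfl⟩ := Finpartition.mem_bot_iff.mp hB
  rw [mem_singleton] at hxB
  simpa [hxB] using hx

end Kreweras

abbrev NoncrossingPartition (n : ℕ) := {P : Finpartition (Icc 1 n) // IsNoncrossing P}

namespace NoncrossingPartition

variable {n : ℕ}

noncomputable def kreweras (σ : NoncrossingPartition n) : NoncrossingPartition n :=
  ⟨krewerasCompl σ.1, isNoncrossing_krewerasCompl σ.1⟩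

theorem kreweras_le_kreweras_iff {σ τ : NoncrossingPartition n} :
    kreweras σ ≤ kreweras τ ↔ τ ≤ σ :=
  ⟨σ.2.le_of_krewerasCompl_le, krewerasCompl_anti⟩

theorem kreweras_injective : Function.Injective (kreweras (n := n)) := fun _ _ h =>
  le_antisymm (kreweras_le_kreweras_iff.mp h.ge) (kreweras_le_kreweras_iff.mp h.le)

noncomputable def krewerasOrderIso (n : ℕ) :
    NoncrossingPartition n ≃o (NoncrossingPartition n)ᵒᵈ :=
  RelIso.ofSurjective
    (OrderEmbedding.ofMapLEIff (toDual ∘ kreweras) fun _ _ => kreweras_le_kreweras_iff)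
    (toDual.surjective.comp (Finite.injective_iff_surjective.mp kreweras_injective))

end NoncrossingPartition

theorem stmt4_general (n : ℕ)
    (μ : Finpartition (Finset.Icc 1 n) → Finpartition (Finset.Icc 1 n) → ℤ)
    (hrefl : ∀ π, IsNoncrossing π → μ π π = 1)
    (hsum : ∀ σ π, IsNoncrossing σ → IsNoncrossing π → refines σ π → σ ≠ π →
      ∑ᶠ τ ∈ {τ : Finpartition (Finset.Icc 1 n) |
        IsNoncrossing τ ∧ refines σ τ ∧ refines τ π}, μ σ τ = 0)
    (π πc bot top : Finpartition (Finset.Icc 1 n))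
    (hπ : IsNoncrossing π)
    (hπc : ∀ i ∈ Finset.Icc 1 n, ∀ j ∈ Finset.Icc 1 n, (sameBlock πc i j ↔ krewRel π i j))
    (hbot : bot.parts = (Finset.Icc 1 n).image (fun i => {i}))
    (htop : top.parts = {Finset.Icc 1 n}) :
    μ bot π = μ πc top := by
  classical
  let _ : LocallyFiniteOrder (NoncrossingPartition n) := Fintype.toLocallyFiniteOrder
  have hμ {σ τ : NoncrossingPartition n} (hστ : σ ≤ τ) : μ σ τ = IncidenceAlgebra.mu ℤ σ τ :=
    IncidenceAlgebra.eq_mu_of_sum_Icc_eq_zero (f := fun σ τ => μ σ.1 τ.1) (fun σ => hrefl σ.1 σ.2)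
      (fun σ τ hlt => by
        rw [← finsum_mem_setOf_le_le_eq_sum_Icc]
        exact hsum σ τ σ.2 τ.2 hlt.le (Subtype.coe_injective.ne hlt.ne)) hστ
  obtain rfl : bot = ⊥ := eq_bot_of_parts_eq_image_singleton hbot
  obtain rfl : πc = krewerasCompl π := eq_of_forall_sameBlock_iff fun i hi j hj => by
    rw [hπc i hi j hj, sameBlock_krewerasCompl]
    exact ⟨fun h => ⟨hi, hj, h⟩, fun h => h.2.2⟩
  let K := NoncrossingPartition.krewerasOrderIso n
  let b : NoncrossingPartition n := ⟨⊥, isNoncrossing_bot⟩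
  let p : NoncrossingPartition n := ⟨π, hπ⟩
  have hbp : b ≤ p := (bot_le : (⊥ : Finpartition (Icc 1 n)) ≤ π)
  have hKb : (ofDual (K b)).1 = top := krewerasCompl_bot htop
  calc μ ⊥ π = IncidenceAlgebra.mu ℤ b p := hμ hbp
    _ = IncidenceAlgebra.mu ℤ (ofDual (K p)) (ofDual (K b)) :=
      (IncidenceAlgebra.mu_map_dual K b p).symm
    _ = μ (krewerasCompl π) top := by
      rw [← hμ (σ := ofDual (K p)) (τ := ofDual (K b)) (K.monotone hbp), hKb]
      rfl

/-- in the poset `NC_n` of noncrossing partitions of `{1,…,n}`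
ordered by refinement, with Möbius function `μ`, bottom element `bot`
(the partition into singletons) and top element `top` (the one-block partition),
one has `μ(0̂, π) = μ(π^c, 1̂)` for every noncrossing `π`, where `πc` is the
Kreweras complement of `π`. -/
theorem stmt4 (n : ℕ) (hn : 1 ≤ n)
    (μ : Finpartition (Finset.Icc 1 n) → Finpartition (Finset.Icc 1 n) → ℤ)
    (hrefl : ∀ π, IsNoncrossing π → μ π π = 1)
    (hsum : ∀ σ π, IsNoncrossing σ → IsNoncrossing π → refines σ π → σ ≠ π →
      ∑ᶠ τ ∈ {τ : Finpartition (Finset.Icc 1 n) |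
        IsNoncrossing τ ∧ refines σ τ ∧ refines τ π}, μ σ τ = 0)
    (π πc bot top : Finpartition (Finset.Icc 1 n))
    (hπ : IsNoncrossing π)
    (hπc : ∀ i ∈ Finset.Icc 1 n, ∀ j ∈ Finset.Icc 1 n, (sameBlock πc i j ↔ krewRel π i j))
    (hbot : bot.parts = (Finset.Icc 1 n).image (fun i => {i}))
    (htop : top.parts = {Finset.Icc 1 n}) :
    μ bot π = μ πc top :=
  stmt4_general n μ hrefl hsum π πc bot top hπ hπc hbot htop
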